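/- Let E be a rearrangement-invariant quasi-Banach function space on (0,∞) with functional ρ_E and Boyd indices p_E, q_E. Let 0 < Θ < ∞ and 0 < r < p_E, and assume either (q_E < ∞ and 1/Θ + 1/q_E > 1/r) or (q_E = ∞ and 1/Θ ≥ 1/r). Then for every compatible couple (X_0, X_1) of quasi-normed spaces, (X_0, X_1)_{Θ,r;E} is an intermediate space: there are constants c, C > 0 such that ‖x‖_{X_0+X_1} ≤ c ‖x‖_{(X_0,X_1)_{Θ,r;E}} for all x ∈ (X_0,X_1)_{Θ,r;E}, and ‖x‖_{(X_0,X_1)_{Θ,r;E}} ≤ C ‖x‖_{X_0∩X_1} for all x ∈ X_0 ∩ X_1; that is, X_0 ∩ X_1 ⊂ (X_0, X_1)_{Θ,r;E} ⊂ X_0 + X_1 with continuous embeddings. -/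

import Mathlib

open MeasureTheory Set Filter
open scoped ENNReal NNReal

noncomputable section

/-- The non-increasing rearrangement of a function on `(0, ∞)` (with Lebesgue measure):
`f^*(t) = inf {λ : |{s > 0 : |f(s)| > λ}| ≤ t}`. -/
def rearr (f : ℝ → ℝ) (t : ℝ) : ℝ≥0∞ :=
  sInf {lam : ℝ≥0∞ |
    volume {s : ℝ | 0 < s ∧ lam < ENNReal.ofReal |f s|} ≤ ENNReal.ofReal t}

/-- A rearrangement-invariant quasi-Banach function space on `(0,∞)`, given by the
functional `ρ` on (extended-)nonnegative measurable functions on `(0,∞)`. -/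
structure RIQBFS where
  ρ : (ℝ → ℝ≥0∞) → ℝ≥0∞
  C : ℝ
  one_le_C : 1 ≤ C
  eq_zero_iff : ∀ f : ℝ → ℝ≥0∞, ρ f = 0 ↔ f =ᵐ[volume.restrict (Set.Ioi (0 : ℝ))] 0
  smul_eq : ∀ (c : ℝ≥0) (f : ℝ → ℝ≥0∞), ρ (fun t => (c : ℝ≥0∞) * f t) = (c : ℝ≥0∞) * ρ f
  quasi_triangle : ∀ f g : ℝ → ℝ≥0∞, ρ (fun t => f t + g t) ≤ ENNReal.ofReal C * (ρ f + ρ g)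
  mono : ∀ f g : ℝ → ℝ≥0∞,
    (∀ᵐ t ∂(volume.restrict (Set.Ioi (0 : ℝ))), g t ≤ f t) → ρ g ≤ ρ f
  fatou : ∀ (fn : ℕ → ℝ → ℝ≥0∞) (f : ℝ → ℝ≥0∞),
    (∀ n, ∀ᵐ t ∂(volume.restrict (Set.Ioi (0 : ℝ))), fn n t ≤ fn (n + 1) t) →
    (∀ᵐ t ∂(volume.restrict (Set.Ioi (0 : ℝ))),
      Filter.Tendsto (fun n => fn n t) Filter.atTop (nhds (f t))) →
    Filter.Tendsto (fun n => ρ (fn n)) Filter.atTop (nhds (ρ f))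
  indicator_finite : ∀ ω : Set ℝ, MeasurableSet ω → ω ⊆ Set.Ioi (0 : ℝ) → volume ω < ⊤ →
    ρ (Set.indicator ω fun _ => 1) < ⊤

/-- The quasi-norm of the space `E`: `‖f‖_E = ρ_E (f^*)`. -/
def RIQBFS.normE (E : RIQBFS) (f : ℝ → ℝ) : ℝ≥0∞ := E.ρ (rearr f)

/-- The operator norm of the dilation operator `(D_a f)(t) = f (a t)` on `E`. -/
def dilNorm (E : RIQBFS) (a : ℝ) : ℝ≥0∞ :=
  ⨆ (f : ℝ → ℝ) (_ : Measurable f) (_ : E.normE f ≤ 1), E.normE fun t => f (a * t)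

/-- The lower Boyd index
`p_E = sup {p > 0 : ∃ c > 0, ∀ 0 < a < 1, ‖D_a‖ ≤ c a^{-1/p}}` (an element of `(0, ∞]`). -/
def lowerBoyd (E : RIQBFS) : ℝ≥0∞ :=
  sSup (ENNReal.ofReal ''
    {p : ℝ | 0 < p ∧ ∃ c : ℝ, 0 < c ∧ ∀ a : ℝ, 0 < a → a < 1 →
      dilNorm E a ≤ ENNReal.ofReal (c * a ^ (-(1 / p)))})

/-- The upper Boyd index
`q_E = inf {q > 0 : ∃ c > 0, ∀ a ≥ 1, ‖D_a‖ ≤ c a^{-1/q}}` (an element of `(0, ∞]`,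
with `inf ∅ = ∞`). -/
def upperBoyd (E : RIQBFS) : ℝ≥0∞ :=
  sInf (ENNReal.ofReal ''
    {q : ℝ | 0 < q ∧ ∃ c : ℝ, 0 < c ∧ ∀ a : ℝ, 1 ≤ a →
      dilNorm E a ≤ ENNReal.ofReal (c * a ^ (-(1 / q)))})

/-- A quasi-normed space continuously embedded into the ambient space `Z`, modelled by an
extended-real-valued quasi-norm `N` on `Z` (the space itself is `{x : N x < ∞}`),
with quasi-triangle constant `C`. -/
structure QuasiNormFun (Z : Type*) [AddCommGroup Z] [Module ℝ Z] where
  N : Z → ℝ≥0∞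
  C : ℝ
  one_le_C : 1 ≤ C
  eq_zero_iff : ∀ x : Z, N x = 0 ↔ x = 0
  smul_eq : ∀ (c : ℝ) (x : Z), N (c • x) = ENNReal.ofReal |c| * N x
  quasi_triangle : ∀ x y : Z, N (x + y) ≤ ENNReal.ofReal C * (N x + N y)

/-- The Peetre K-functional
`K(t, x; X₀, X₁) = inf {‖x₀‖_{X₀} + t ‖x₁‖_{X₁} : x = x₀ + x₁}`. -/
def Kfun {Z : Type*} [AddCommGroup Z] (N0 N1 : Z → ℝ≥0∞) (t : ℝ) (x : Z) : ℝ≥0∞ :=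
  ⨅ (p : Z × Z) (_ : p.1 + p.2 = x), N0 p.1 + ENNReal.ofReal t * N1 p.2

/-- The quasi-norm of the interpolation space `(X₀, X₁)_{Θ,r;E}` of Kwok-Pun Ho:
`‖x‖ = ρ_E (t ↦ t^{-1/r} K(t^{1/Θ}, x; X₀, X₁))`. -/
def interpNorm (E : RIQBFS) (Θ r : ℝ) {Z : Type*} [AddCommGroup Z]
    (N0 N1 : Z → ℝ≥0∞) (x : Z) : ℝ≥0∞ :=
  E.ρ fun t => ENNReal.ofReal (t ^ (-(1 / r))) * Kfun N0 N1 (t ^ (1 / Θ)) x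

/-!
Both embeddings come down to the single weight `w(t) = t^{-1/r} min(1, t^{1/Θ})`. Since
`min(1, s) K(1, x) ≤ K(s, x) ≤ min(1, s) max(‖x‖_{X₀}, ‖x‖_{X₁})`, one gets
`ρ_E(w) K(1, x) ≤ ‖x‖_{Θ,r;E} ≤ ρ_E(w) ‖x‖_{X₀∩X₁}`, and `ρ_E(w) > 0` because `w > 0`.
The content is `ρ_E(w) < ∞`. Split `w` at `t = 1` and cut each half into geometric blocks
`[l^{-n}, l^{-n-1})`, resp. `(l^{n+1}, l^n]`. On each block `w` is at most a constant times the
indicator of some `(0, b]`, whose norm is the fundamental function `φ_E(b) ≤ φ_E(1) ‖D_{1/b}‖`.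
The Boyd conditions `r < p_E` and `1/r < 1/Θ + 1/q_E` make the block norms decay like `l^{δn}`
with `δ > 0`, and taking `l` small beats the factors `C_E^{n+1}` of the iterated
quasi-triangle inequality.
-/

open Topology

theorem exists_mul_rpow_lt_one (C : ℝ) {δ : ℝ} (hδ : 0 < δ) :
    ∃ l : ℝ, 0 < l ∧ l < 1 ∧ C * l ^ δ < 1 := by
  have hlim : Tendsto (fun l : ℝ => C * l ^ δ) (𝓝[>] 0) (𝓝 0) := by
    have h := (Real.continuousAt_rpow_const 0 δ (Or.inr hδ.le)).tendsto.const_mul C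
    rw [Real.zero_rpow hδ.ne', mul_zero] at h
    exact h.mono_left nhdsWithin_le_nhds
  obtain ⟨l, hlC, hl⟩ :=
    ((hlim.eventually (gt_mem_nhds one_pos)).and (Ioo_mem_nhdsGT one_pos)).exists
  exact ⟨l, hl.1, hl.2, hlC⟩

theorem exists_pos_le_ofReal {a : ℝ≥0∞} (ha : a ≠ ⊤) : ∃ c : ℝ, 0 < c ∧ a ≤ ENNReal.ofReal c :=
  ⟨a.toReal + 1, by positivity, by
    rw [← ENNReal.ofReal_toReal ha, ENNReal.toReal_ofReal ENNReal.toReal_nonneg]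
    exact ENNReal.ofReal_le_ofReal (le_add_of_nonneg_right zero_le_one)⟩

theorem ofReal_sub_lt_of_ofReal_lt_add {a b : ℝ} {c : ℝ≥0∞} (hb : 0 ≤ b) (hc : c ≠ 0)
    (h : ENNReal.ofReal a < ENNReal.ofReal b + c) : ENNReal.ofReal (a - b) < c := by
  rw [ENNReal.ofReal_sub _ hb]
  rcases le_total (ENNReal.ofReal b) (ENNReal.ofReal a) with hba | hab
  · exact ENNReal.sub_lt_of_lt_add hba (by rwa [add_comm])
  · rw [tsub_eq_zero_of_le hab]
    exact pos_iff_ne_zero.2 hc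

theorem rearr_indicator_Ioc {b c : ℝ} (hb : 0 < b) (hc : 0 < c) :
    rearr ((Ioc 0 b).indicator fun _ => c) = (Iio b).indicator fun _ => ENNReal.ofReal c := by
  have hlevel : ∀ lam : ℝ≥0∞,
      {s : ℝ | 0 < s ∧ lam < ENNReal.ofReal |(Ioc 0 b).indicator (fun _ => c) s|}
        = if lam < ENNReal.ofReal c then Ioc 0 b else ∅ := by
    intro lam
    ext s
    by_cases hs : s ∈ Ioc 0 b <;> split_ifs with hlam <;>
      simp_all [indicator_of_mem, indicator_of_notMem, abs_of_pos hc]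
  funext t
  simp only [rearr, hlevel, apply_ite volume, Real.volume_Ioc, measure_empty, sub_zero]
  by_cases ht : t < b
  · have hbt : ¬ ENNReal.ofReal b ≤ ENNReal.ofReal t := by
      rw [not_le, ENNReal.ofReal_lt_ofReal_iff hb]; exact ht
    rw [indicator_of_mem (mem_Iio.2 ht), ← csInf_Ici (a := ENNReal.ofReal c)]
    congr 1
    ext lam
    by_cases hlam : lam < ENNReal.ofReal c
    · simp [hlam, hbt, not_le.2 hlam]
    · simp [hlam, not_lt.1 hlam]
  · rw [indicator_of_notMem (mt mem_Iio.1 ht)]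
    refine le_antisymm (sInf_le ?_) zero_le
    simp only [mem_ofPred_eq]
    split_ifs
    exacts [ENNReal.ofReal_le_ofReal (not_lt.1 ht), zero_le]

def interpWeight (Θ r t : ℝ) : ℝ≥0∞ :=
  ENNReal.ofReal (t ^ (-(1 / r))) * min 1 (ENNReal.ofReal (t ^ (1 / Θ)))

theorem interpWeight_ne_zero {Θ r t : ℝ} (ht : 0 < t) : interpWeight Θ r t ≠ 0 := by
  simp [interpWeight, Real.rpow_pos_of_pos ht]

theorem interpWeight_le {Θ r t : ℝ} (ht : 0 < t) :
    interpWeight Θ r t ≤ (Ioc 0 1).indicator (fun t => ENNReal.ofReal (t ^ (1 / Θ - 1 / r))) t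
      + (Ioi 1).indicator (fun t => ENNReal.ofReal (t ^ (-(1 / r)))) t := by
  by_cases ht1 : t ≤ 1
  · rw [indicator_of_mem (show t ∈ Ioc 0 1 from ⟨ht, ht1⟩),
      indicator_of_notMem (show t ∉ Ioi 1 from not_lt.2 ht1), add_zero, sub_eq_neg_add,
      Real.rpow_add ht, ENNReal.ofReal_mul (by positivity)]
    exact mul_le_mul_right (min_le_right _ _) _
  · rw [indicator_of_notMem (fun h => ht1 h.2), indicator_of_mem (show t ∈ Ioi 1 from not_le.1 ht1),
      zero_add]
    exact mul_le_of_le_one_right' (min_le_left _ _)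

section Kfun

variable {Z : Type*} [AddCommGroup Z] {N0 N1 : Z → ℝ≥0∞}

theorem min_one_mul_Kfun_one_le (t : ℝ) (x : Z) :
    min 1 (ENNReal.ofReal t) * Kfun N0 N1 1 x ≤ Kfun N0 N1 t x := by
  refine le_iInf₂ fun p hp => ?_
  calc min 1 (ENNReal.ofReal t) * Kfun N0 N1 1 x
      ≤ min 1 (ENNReal.ofReal t) * (N0 p.1 + ENNReal.ofReal 1 * N1 p.2) := by
        gcongr; exact iInf₂_le p hp
    _ ≤ N0 p.1 + ENNReal.ofReal t * N1 p.2 := by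
        rw [ENNReal.ofReal_one, one_mul, mul_add]
        gcongr
        · exact mul_le_of_le_one_left' (min_le_left _ _)
        · exact min_le_right _ _

theorem Kfun_le_min_mul_max (h0 : N0 0 = 0) (h1 : N1 0 = 0) (t : ℝ) (x : Z) :
    Kfun N0 N1 t x ≤ min 1 (ENNReal.ofReal t) * max (N0 x) (N1 x) := by
  rcases le_total 1 (ENNReal.ofReal t) with ht | ht
  · rw [min_eq_left ht, one_mul]
    calc Kfun N0 N1 t x ≤ N0 x + ENNReal.ofReal t * N1 0 := iInf₂_le (x, 0) (add_zero x)
      _ ≤ max (N0 x) (N1 x) := by rw [h1, mul_zero, add_zero]; exact le_max_left _ _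
  · rw [min_eq_right ht]
    calc Kfun N0 N1 t x ≤ N0 0 + ENNReal.ofReal t * N1 x := iInf₂_le (0, x) (zero_add x)
      _ ≤ ENNReal.ofReal t * max (N0 x) (N1 x) := by
        rw [h0, zero_add]; gcongr; exact le_max_right _ _

end Kfun

namespace RIQBFS

variable (E : RIQBFS)

theorem rho_mono_of_le {f g : ℝ → ℝ≥0∞} (h : ∀ t, 0 < t → g t ≤ f t) : E.ρ g ≤ E.ρ f :=
  E.mono f g ((ae_restrict_iff' measurableSet_Ioi).2 (ae_of_all _ h))

theorem rho_congr_ae {f g : ℝ → ℝ≥0∞} (h : f =ᵐ[volume.restrict (Ioi 0)] g) :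
    E.ρ f = E.ρ g :=
  le_antisymm (E.mono g f (h.mono fun _ ht => ht.le)) (E.mono f g (h.mono fun _ ht => ht.ge))

theorem rho_ne_zero_of_ne_zero_on_Ioo {f : ℝ → ℝ≥0∞} {b : ℝ} (hb : 0 < b)
    (hf : ∀ t ∈ Ioo 0 b, f t ≠ 0) : E.ρ f ≠ 0 := by
  intro h0
  have hnull : volume.restrict (Ioi 0) (Ioo 0 b) = 0 :=
    measure_mono_null (fun t ht => hf t ht) (ae_iff.1 ((E.eq_zero_iff f).1 h0))
  rw [Measure.restrict_apply measurableSet_Ioo, Ioo_inter_Ioi, max_self, Real.volume_Ioo] at hnull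
  simp only [sub_zero, ENNReal.ofReal_eq_zero] at hnull
  linarith

theorem rho_const_mul (c : ℝ≥0∞) (f : ℝ → ℝ≥0∞) :
    E.ρ (fun t => c * f t) = c * E.ρ f := by
  rcases eq_or_ne c ⊤ with rfl | hc
  · -- `smul_eq` only covers finite constants: reach `⊤ * f` from `n * f` through `fatou`.
    have hnat : ∀ n : ℕ, E.ρ (fun t => n * f t) = n * E.ρ f := fun n => by
      exact_mod_cast E.smul_eq n f
    have hlim := E.fatou (fun n t => n * f t) (fun t => ⊤ * f t)
      (fun n => ae_of_all _ fun t => by gcongr; exact_mod_cast n.le_succ)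
      (ae_of_all _ fun t => ENNReal.Tendsto.mul_const ENNReal.tendsto_nat_nhds_top
        (Or.inl ENNReal.top_ne_zero))
    simp only [hnat] at hlim
    exact tendsto_nhds_unique hlim
      (ENNReal.Tendsto.mul_const ENNReal.tendsto_nat_nhds_top (Or.inl ENNReal.top_ne_zero))
  · lift c to ℝ≥0 using hc
    exact E.smul_eq c f

theorem rho_finset_sum_le (g : ℕ → ℝ → ℝ≥0∞) (n : ℕ) :
    E.ρ (fun t => ∑ k ∈ Finset.range n, g k t)
      ≤ ∑ k ∈ Finset.range n, ENNReal.ofReal E.C ^ (k + 1) * E.ρ (g k) := by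
  induction n generalizing g with
  | zero => simp [(E.eq_zero_iff fun _ => 0).2 (ae_of_all _ fun _ => rfl)]
  | succ n ih =>
    simp only [Finset.sum_range_succ']
    calc E.ρ (fun t => ∑ k ∈ Finset.range n, g (k + 1) t + g 0 t)
        ≤ ENNReal.ofReal E.C * (E.ρ (fun t => ∑ k ∈ Finset.range n, g (k + 1) t) + E.ρ (g 0)) :=
          E.quasi_triangle _ _
      _ ≤ ENNReal.ofReal E.C * (∑ k ∈ Finset.range n,
            ENNReal.ofReal E.C ^ (k + 1) * E.ρ (g (k + 1)) + E.ρ (g 0)) := by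
          gcongr; exact ih _
      _ = _ := by simp only [mul_add, Finset.mul_sum, pow_succ', pow_zero, mul_one, mul_assoc]

theorem rho_tsum_le (g : ℕ → ℝ → ℝ≥0∞) :
    E.ρ (fun t => ∑' k, g k t) ≤ ∑' k, ENNReal.ofReal E.C ^ (k + 1) * E.ρ (g k) := by
  have hlim := E.fatou (fun n t => ∑ k ∈ Finset.range n, g k t) (fun t => ∑' k, g k t)
    (fun n => ae_of_all _ fun t => by simp [Finset.sum_range_succ])
    (ae_of_all _ fun t => ENNReal.tendsto_nat_tsum _)
  exact le_of_tendsto' hlim fun n => (E.rho_finset_sum_le g n).trans (ENNReal.sum_le_tsum _)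

theorem rho_lt_top_of_le_tsum {f : ℝ → ℝ≥0∞} (g : ℕ → ℝ → ℝ≥0∞) {D s : ℝ≥0∞} (hD : D ≠ ⊤)
    (hs : ENNReal.ofReal E.C * s < 1) (hg : ∀ k, E.ρ (g k) ≤ D * s ^ k)
    (hf : ∀ t, 0 < t → ∃ k, f t ≤ g k t) : E.ρ f < ⊤ := by
  have hfg : E.ρ f ≤ E.ρ (fun t => ∑' k, g k t) := E.rho_mono_of_le fun t ht => by
    obtain ⟨k, hk⟩ := hf t ht
    exact hk.trans (ENNReal.le_tsum k)
  calc E.ρ f ≤ ∑' k, ENNReal.ofReal E.C ^ (k + 1) * E.ρ (g k) := hfg.trans (E.rho_tsum_le g)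
    _ ≤ ∑' k, ENNReal.ofReal E.C * D * (ENNReal.ofReal E.C * s) ^ k := by
        refine ENNReal.tsum_le_tsum fun k => ?_
        calc _ ≤ ENNReal.ofReal E.C ^ (k + 1) * (D * s ^ k) := by gcongr; exact hg k
          _ = _ := by ring
    _ = ENNReal.ofReal E.C * D * (1 - ENNReal.ofReal E.C * s)⁻¹ := by
        rw [ENNReal.tsum_mul_left, ENNReal.tsum_geometric]
    _ < ⊤ := by
        refine ENNReal.mul_lt_top (ENNReal.mul_lt_top ENNReal.ofReal_lt_top hD.lt_top) ?_
        exact ENNReal.inv_lt_top.2 (tsub_pos_of_lt hs)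

def fundamentalFun (b : ℝ) : ℝ≥0∞ := E.ρ ((Ioc (0 : ℝ) b).indicator fun _ => 1)

theorem fundamentalFun_lt_top (b : ℝ) : E.fundamentalFun b < ⊤ :=
  E.indicator_finite _ measurableSet_Ioc Ioc_subset_Ioi_self (by simp [Real.volume_Ioc])

theorem fundamentalFun_ne_zero {b : ℝ} (hb : 0 < b) : E.fundamentalFun b ≠ 0 :=
  E.rho_ne_zero_of_ne_zero_on_Ioo hb fun t ht => by
    simp [indicator_of_mem (Ioo_subset_Ioc_self ht)]

theorem normE_indicator_Ioc {b c : ℝ} (hb : 0 < b) (hc : 0 < c) :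
    E.normE ((Ioc 0 b).indicator fun _ => c) = ENNReal.ofReal c * E.fundamentalFun b := by
  rw [normE, rearr_indicator_Ioc hb hc, fundamentalFun, ← rho_const_mul]
  apply rho_congr_ae
  filter_upwards [ae_restrict_mem measurableSet_Ioi,
    ae_restrict_of_ae (indicator_ae_eq_of_ae_eq_set (f := fun _ => ENNReal.ofReal c)
      (Iio_ae_eq_Iic (a := b)))] with t ht hte
  rw [hte]
  by_cases htb : t ≤ b
  · simp [htb, mem_Ioi.1 ht]
  · simp [htb]

theorem fundamentalFun_inv_le_mul_dilNorm {a : ℝ} (ha : 0 < a) :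
    E.fundamentalFun a⁻¹ ≤ E.fundamentalFun 1 * dilNorm E a := by
  set φ1 := E.fundamentalFun 1
  have hφ1 : φ1 ≠ 0 := E.fundamentalFun_ne_zero one_pos
  have hφ1' : φ1 ≠ ⊤ := (E.fundamentalFun_lt_top 1).ne
  set c : ℝ := φ1.toReal⁻¹
  have hc : 0 < c := inv_pos.2 (ENNReal.toReal_pos hφ1 hφ1')
  have hcφ : ENNReal.ofReal c * φ1 = 1 := by
    rw [ENNReal.ofReal_inv_of_pos (ENNReal.toReal_pos hφ1 hφ1'), ENNReal.ofReal_toReal hφ1',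
      ENNReal.inv_mul_cancel hφ1 hφ1']
  set f : ℝ → ℝ := (Ioc 0 1).indicator fun _ => c
  have hf : E.normE f ≤ 1 := ((E.normE_indicator_Ioc one_pos hc).trans hcφ).le
  have hfa : (fun t => f (a * t)) = (Ioc 0 a⁻¹).indicator fun _ => c := by
    funext t
    change (Ioc 0 1).indicator (fun _ => c) (a * t) = _
    rw [← indicator_comp_right (a * ·), preimage_const_mul_Ioc₀ _ _ ha, zero_div, one_div]
    rfl
  have hdil : ENNReal.ofReal c * E.fundamentalFun a⁻¹ ≤ dilNorm E a := by
    rw [← E.normE_indicator_Ioc (inv_pos.2 ha) hc, ← hfa]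
    exact le_iSup₂_of_le f (measurable_const.indicator measurableSet_Ioc) (le_iSup_of_le hf le_rfl)
  calc E.fundamentalFun a⁻¹ = φ1 * (ENNReal.ofReal c * E.fundamentalFun a⁻¹) := by
        rw [← mul_assoc, mul_comm φ1, hcφ, one_mul]
    _ ≤ φ1 * dilNorm E a := by gcongr

theorem ofReal_C_mul_ofReal_lt_one {x : ℝ} (hx : E.C * x < 1) :
    ENNReal.ofReal E.C * ENNReal.ofReal x < 1 := by
  rw [← ENNReal.ofReal_mul (by linarith [E.one_le_C])]
  exact ENNReal.ofReal_lt_one.2 hx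

theorem rho_indicator_Ioi_rpow_lt_top {r p c : ℝ} (hr : 0 < r) (hrp : r < p)
    (hdil : ∀ a, 0 < a → a < 1 → dilNorm E a ≤ ENNReal.ofReal (c * a ^ (-(1 / p)))) :
    E.ρ ((Ioi 1).indicator fun t => ENNReal.ofReal (t ^ (-(1 / r)))) < ⊤ := by
  have hδ : 0 < 1 / r - 1 / p := sub_pos.2 (one_div_lt_one_div_of_lt hr hrp)
  obtain ⟨l, hl0, hl1, hlC⟩ := exists_mul_rpow_lt_one E.C hδ
  refine E.rho_lt_top_of_le_tsum (fun n t => ENNReal.ofReal ((l ^ n) ^ (1 / r)) *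
      (Ioc 0 (l ^ (n + 1))⁻¹).indicator (fun _ => 1) t)
    (D := E.fundamentalFun 1 * ENNReal.ofReal (c * l ^ (-(1 / p))))
    (ENNReal.mul_ne_top (E.fundamentalFun_lt_top 1).ne ENNReal.ofReal_ne_top)
    (E.ofReal_C_mul_ofReal_lt_one hlC) (fun n => ?_) (fun t ht => ?_)
  · have hpow : 0 < l ^ (n + 1) := pow_pos hl0 _
    calc E.ρ _ = ENNReal.ofReal ((l ^ n) ^ (1 / r)) * E.fundamentalFun (l ^ (n + 1))⁻¹ :=
          E.rho_const_mul _ _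
      _ ≤ ENNReal.ofReal ((l ^ n) ^ (1 / r)) *
            (E.fundamentalFun 1 * ENNReal.ofReal (c * (l ^ (n + 1)) ^ (-(1 / p)))) := by
          gcongr
          exact (E.fundamentalFun_inv_le_mul_dilNorm hpow).trans
            (by gcongr; exact hdil _ hpow (pow_lt_one₀ hl0.le hl1 n.succ_ne_zero))
      _ = E.fundamentalFun 1 *
            ENNReal.ofReal (c * l ^ (-(1 / p)) * (l ^ (1 / r - 1 / p)) ^ n) := by
          rw [mul_left_comm, ← ENNReal.ofReal_mul (by positivity), ← Real.rpow_pow_comm hl0.le,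
            ← Real.rpow_pow_comm hl0.le, sub_eq_add_neg, Real.rpow_add hl0]
          ring_nf
      _ = _ := by
          rw [ENNReal.ofReal_mul' (by positivity), ENNReal.ofReal_pow (by positivity), mul_assoc]
  · by_cases ht1 : t ∈ Ioi 1
    · obtain ⟨n, hn, hn'⟩ := exists_nat_pow_near (le_of_lt ht1) (one_lt_inv₀ hl0 |>.2 hl1)
      rw [inv_pow] at hn hn'
      refine ⟨n, ?_⟩
      rw [indicator_of_mem ht1,
        indicator_of_mem (show t ∈ Ioc 0 (l ^ (n + 1))⁻¹ from ⟨ht, hn'.le⟩), mul_one]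
      refine ENNReal.ofReal_le_ofReal ?_
      calc t ^ (-(1 / r)) ≤ ((l ^ n)⁻¹) ^ (-(1 / r)) :=
            Real.rpow_le_rpow_of_nonpos (by positivity) hn (by simp [hr.le])
        _ = (l ^ n) ^ (1 / r) := by
            rw [Real.inv_rpow (by positivity), Real.rpow_neg (by positivity), inv_inv]
    · exact ⟨0, by simp [indicator_of_notMem ht1]⟩

theorem rho_indicator_Ioc_rpow_lt_top {s q c : ℝ} (hsq : 0 < s + 1 / q)
    (hdil : ∀ a, 1 ≤ a → dilNorm E a ≤ ENNReal.ofReal (c * a ^ (-(1 / q)))) :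
    E.ρ ((Ioc 0 1).indicator fun t => ENNReal.ofReal (t ^ s)) < ⊤ := by
  obtain ⟨l, hl0, hl1, hlC⟩ := exists_mul_rpow_lt_one E.C hsq
  -- `M` bounds the ratio of `t ^ s` over a block `(l ^ (n + 1), l ^ n]`, whatever the sign of `s`.
  set M := max (l ^ s) 1
  refine E.rho_lt_top_of_le_tsum (fun n t => ENNReal.ofReal (M * (l ^ n) ^ s) *
      (Ioc 0 (l ^ n)).indicator (fun _ => 1) t)
    (D := E.fundamentalFun 1 * ENNReal.ofReal (M * c))
    (ENNReal.mul_ne_top (E.fundamentalFun_lt_top 1).ne ENNReal.ofReal_ne_top)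
    (E.ofReal_C_mul_ofReal_lt_one hlC) (fun n => ?_) (fun t ht => ?_)
  · have hpow : 0 < (l ^ n)⁻¹ := inv_pos.2 (pow_pos hl0 _)
    calc E.ρ _ = ENNReal.ofReal (M * (l ^ n) ^ s) * E.fundamentalFun (l ^ n)⁻¹⁻¹ := by
          rw [inv_inv]; exact E.rho_const_mul _ _
      _ ≤ ENNReal.ofReal (M * (l ^ n) ^ s) *
            (E.fundamentalFun 1 * ENNReal.ofReal (c * ((l ^ n)⁻¹) ^ (-(1 / q)))) := by
          gcongr
          exact (E.fundamentalFun_inv_le_mul_dilNorm hpow).trans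
            (by gcongr; exact hdil _ (one_le_inv₀ (pow_pos hl0 _) |>.2 (pow_le_one₀ hl0.le hl1.le)))
      _ = E.fundamentalFun 1 * ENNReal.ofReal (M * c * (l ^ (s + 1 / q)) ^ n) := by
          rw [mul_left_comm, ← ENNReal.ofReal_mul (by positivity), Real.inv_rpow (by positivity),
            Real.rpow_neg (by positivity), inv_inv, ← Real.rpow_pow_comm hl0.le,
            ← Real.rpow_pow_comm hl0.le, Real.rpow_add hl0]
          ring_nf
      _ = _ := by
          rw [ENNReal.ofReal_mul' (by positivity), ENNReal.ofReal_pow (by positivity), mul_assoc]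
  · by_cases ht1 : t ∈ Ioc 0 1
    · obtain ⟨n, hn, hn'⟩ := exists_nat_pow_near_of_lt_one ht ht1.2 hl0 hl1
      refine ⟨n, ?_⟩
      rw [indicator_of_mem ht1, indicator_of_mem (show t ∈ Ioc 0 (l ^ n) from ⟨ht, hn'⟩), mul_one]
      refine ENNReal.ofReal_le_ofReal ?_
      rcases le_total 0 s with hs | hs
      · calc t ^ s ≤ (l ^ n) ^ s := Real.rpow_le_rpow ht.le hn' hs
          _ ≤ M * (l ^ n) ^ s := le_mul_of_one_le_left (by positivity) (le_max_right _ _)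
      · calc t ^ s ≤ (l ^ (n + 1)) ^ s := Real.rpow_le_rpow_of_nonpos (by positivity) hn.le hs
          _ = l ^ s * (l ^ n) ^ s := by
            rw [pow_succ, Real.mul_rpow (by positivity) hl0.le, mul_comm]
          _ ≤ M * (l ^ n) ^ s := by gcongr; exact le_max_left _ _
    · exact ⟨0, by simp [indicator_of_notMem ht1]⟩

theorem exists_dilNorm_le_of_lt_lowerBoyd {r : ℝ} (h : ENNReal.ofReal r < lowerBoyd E) :
    ∃ p, r < p ∧ ∃ c : ℝ, ∀ a, 0 < a → a < 1 →
      dilNorm E a ≤ ENNReal.ofReal (c * a ^ (-(1 / p))) := by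
  obtain ⟨_, ⟨p, ⟨-, c, -, hc⟩, rfl⟩, hrp⟩ := lt_sSup_iff.1 h
  exact ⟨p, (ENNReal.ofReal_lt_ofReal_iff'.1 hrp).1, c, hc⟩

theorem exists_dilNorm_le_of_lt_inv_upperBoyd {x : ℝ} (h : ENNReal.ofReal x < (upperBoyd E)⁻¹) :
    ∃ q, x < 1 / q ∧ ∃ c : ℝ, ∀ a, 1 ≤ a →
      dilNorm E a ≤ ENNReal.ofReal (c * a ^ (-(1 / q))) := by
  obtain ⟨_, ⟨q, ⟨hq, c, -, hc⟩, rfl⟩, hqx⟩ := sInf_lt_iff.1 (ENNReal.lt_inv_iff_lt_inv.1 h)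
  have hmul : ENNReal.ofReal (q * x) < 1 := by
    rw [ENNReal.ofReal_mul hq.le]
    exact ENNReal.mul_lt_of_lt_div (by rwa [one_div])
  refine ⟨q, ?_, c, hc⟩
  rw [lt_div_iff₀ hq, mul_comm]
  exact ENNReal.ofReal_lt_one.1 hmul

theorem rho_interpWeight_lt_top {Θ r : ℝ} (hΘ : 0 < Θ) (hr : 0 < r)
    (hrE : ENNReal.ofReal r < lowerBoyd E)
    (hq : (upperBoyd E ≠ ⊤ ∧
        ENNReal.ofReal (1 / r) < ENNReal.ofReal (1 / Θ) + (upperBoyd E)⁻¹) ∨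
      (upperBoyd E = ⊤ ∧ 1 / r ≤ 1 / Θ)) :
    E.ρ (interpWeight Θ r) < ⊤ := by
  obtain ⟨p, hrp, cp, hp⟩ := E.exists_dilNorm_le_of_lt_lowerBoyd hrE
  have hnear : E.ρ ((Ioc 0 1).indicator fun t => ENNReal.ofReal (t ^ (1 / Θ - 1 / r))) < ⊤ := by
    rcases hq with ⟨hqE, hlt⟩ | ⟨-, hle⟩
    · obtain ⟨q, hxq, cq, hq⟩ := E.exists_dilNorm_le_of_lt_inv_upperBoyd
        (ofReal_sub_lt_of_ofReal_lt_add (by positivity) (ENNReal.inv_ne_zero.2 hqE) hlt)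
      exact E.rho_indicator_Ioc_rpow_lt_top (by linarith) hq
    · refine lt_of_le_of_lt (E.rho_mono_of_le fun t _ => indicator_le_indicator' fun ht => ?_)
        (E.fundamentalFun_lt_top 1)
      exact ENNReal.ofReal_le_one.2 (Real.rpow_le_one ht.1.le ht.2 (by linarith))
  calc E.ρ (interpWeight Θ r)
      ≤ ENNReal.ofReal E.C *
          (E.ρ ((Ioc 0 1).indicator fun t => ENNReal.ofReal (t ^ (1 / Θ - 1 / r)))
            + E.ρ ((Ioi 1).indicator fun t => ENNReal.ofReal (t ^ (-(1 / r))))) :=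
        (E.rho_mono_of_le fun _ ht => interpWeight_le ht).trans (E.quasi_triangle _ _)
    _ < ⊤ := ENNReal.mul_lt_top ENNReal.ofReal_lt_top
        (ENNReal.add_lt_top.2 ⟨hnear, E.rho_indicator_Ioi_rpow_lt_top hr hrp hp⟩)

theorem rho_interpWeight_mul_Kfun_le_interpNorm {Z : Type*} [AddCommGroup Z] {N0 N1 : Z → ℝ≥0∞}
    (Θ r : ℝ) (x : Z) :
    E.ρ (interpWeight Θ r) * Kfun N0 N1 1 x ≤ interpNorm E Θ r N0 N1 x := by
  rw [mul_comm, ← E.rho_const_mul]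
  refine E.rho_mono_of_le fun t _ => ?_
  calc Kfun N0 N1 1 x * interpWeight Θ r t
      = ENNReal.ofReal (t ^ (-(1 / r))) *
          (min 1 (ENNReal.ofReal (t ^ (1 / Θ))) * Kfun N0 N1 1 x) := by
        rw [interpWeight]; ring
    _ ≤ _ := by gcongr; exact min_one_mul_Kfun_one_le _ x

theorem interpNorm_le_rho_interpWeight_mul {Z : Type*} [AddCommGroup Z] {N0 N1 : Z → ℝ≥0∞}
    (Θ r : ℝ) (h0 : N0 0 = 0) (h1 : N1 0 = 0) (x : Z) :
    interpNorm E Θ r N0 N1 x ≤ E.ρ (interpWeight Θ r) * max (N0 x) (N1 x) := by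
  rw [mul_comm, ← E.rho_const_mul]
  refine E.rho_mono_of_le fun t _ => ?_
  calc ENNReal.ofReal (t ^ (-(1 / r))) * Kfun N0 N1 (t ^ (1 / Θ)) x
      ≤ ENNReal.ofReal (t ^ (-(1 / r))) *
          (min 1 (ENNReal.ofReal (t ^ (1 / Θ))) * max (N0 x) (N1 x)) := by
        gcongr; exact Kfun_le_min_mul_max h0 h1 _ x
    _ = max (N0 x) (N1 x) * interpWeight Θ r t := by rw [interpWeight]; ring

end RIQBFS

/-- Under the Boyd-index conditions of Theorem 14, for every compatible couple
`(X₀, X₁)` of quasi-normed spaces, `(X₀, X₁)_{Θ,r;E}` is an intermediate space: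
`X₀ ∩ X₁ ⊂ (X₀, X₁)_{Θ,r;E} ⊂ X₀ + X₁` with continuous embeddings
(here `‖x‖_{X₀+X₁} = K(1, x)` and `‖x‖_{X₀∩X₁} = max{‖x‖_{X₀}, ‖x‖_{X₁}}`). -/
theorem stmt8 {Z : Type*} [AddCommGroup Z] [Module ℝ Z]
    (E : RIQBFS) (Θ r : ℝ) (hΘ : 0 < Θ) (hr : 0 < r)
    (hrE : ENNReal.ofReal r < lowerBoyd E)
    (hq : (upperBoyd E ≠ ⊤ ∧
        ENNReal.ofReal (1 / r) < ENNReal.ofReal (1 / Θ) + (upperBoyd E)⁻¹) ∨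
      (upperBoyd E = ⊤ ∧ 1 / r ≤ 1 / Θ))
    (X0 X1 : QuasiNormFun Z) :
    (∃ c : ℝ, 0 < c ∧ ∀ x : Z, interpNorm E Θ r X0.N X1.N x < ⊤ →
      Kfun X0.N X1.N 1 x ≤ ENNReal.ofReal c * interpNorm E Θ r X0.N X1.N x) ∧
    (∃ C : ℝ, 0 < C ∧ ∀ x : Z, X0.N x < ⊤ → X1.N x < ⊤ →
      interpNorm E Θ r X0.N X1.N x ≤ ENNReal.ofReal C * max (X0.N x) (X1.N x)) := by
  set w := E.ρ (interpWeight Θ r)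
  have hw_top : w ≠ ⊤ := (E.rho_interpWeight_lt_top hΘ hr hrE hq).ne
  have hw_zero : w ≠ 0 :=
    E.rho_ne_zero_of_ne_zero_on_Ioo one_pos fun _ ht => interpWeight_ne_zero ht.1
  refine ⟨?_, ?_⟩
  · obtain ⟨c, hc, hwc⟩ := exists_pos_le_ofReal (ENNReal.inv_ne_top.2 hw_zero)
    refine ⟨c, hc, fun x _ => ?_⟩
    calc Kfun X0.N X1.N 1 x = w⁻¹ * (w * Kfun X0.N X1.N 1 x) :=
          (ENNReal.inv_mul_cancel_left hw_zero hw_top).symm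
      _ ≤ ENNReal.ofReal c * interpNorm E Θ r X0.N X1.N x := by
          gcongr; exact E.rho_interpWeight_mul_Kfun_le_interpNorm Θ r x
  · obtain ⟨C, hC, hwC⟩ := exists_pos_le_ofReal hw_top
    refine ⟨C, hC, fun x _ _ => ?_⟩
    exact (E.interpNorm_le_rho_interpWeight_mul Θ r ((X0.eq_zero_iff 0).2 rfl)
      ((X1.eq_zero_iff 0).2 rfl) x).trans (by gcongr)
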